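/- Let (X,d) be a metric space. If there exists a subset A ⊆ X that is not Bourbaki-bounded and such that for every δ > 0 the set {x ∈ A : I(x) ≥ δ} is finite (where I(x) = d(x, X∖{x}) is the isolation index), then there exist uniformly continuous functions f, h : X → ℝ whose product is not uniformly continuous; in particular U(X) is not a ring. -/

import Mathlib

/-- `A` is a Bourbaki-bounded subset of `X`: every uniformly continuous
real-valued function on `X` is bounded on `A`. -/
def IsBourbakiBoundedSubset {X : Type*} [MetricSpace X] (A : Set X) : Prop :=
  ∀ f : X → ℝ, UniformContinuous f → ∃ C : ℝ, ∀ x ∈ A, |f x| ≤ C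

/-- The Atsuji isolation index `I(x) = d(x, X \ {x})`, computed in `[0,∞]` so
that it is `∞` when `x` is the only point of `X`. -/
noncomputable def isolationIndex {X : Type*} [MetricSpace X] (x : X) : ENNReal :=
  EMetric.infEdist x ({x}ᶜ : Set X)

/-!
Pick `f ∈ U(X)` with `|f|` unbounded on `A`. For each `ε > 0`, discarding the finitely many
points of `A` with `I(x) ≥ ε` keeps `|f|` unbounded, so there are `x n ∈ A` along which `|f|`
grows by more than `1` at each step, together with points `y n ≠ x n` with `d(x n, y n) → 0`.
Uniform continuity of `f` makes the `x n` uniformly separated, so tents of radius `d(x n, y n)`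
and height `|f (x n)|⁻¹` around the `x n` have disjoint supports; as the heights tend to `0`,
their supremum `h` is uniformly continuous, while `f * h` jumps by at least `1` between `x n`
and `y n`.
-/

open Filter Topology Set Uniformity

section Tent

variable {X : Type*} [PseudoMetricSpace X]

noncomputable def tent (c : X) (r : ℝ) (z : X) : ℝ := max 0 (1 - dist z c / r)

theorem tent_nonneg (c : X) (r : ℝ) (z : X) : 0 ≤ tent c r z := le_max_left _ _

theorem tent_le_one (c : X) {r : ℝ} (hr : 0 ≤ r) (z : X) : tent c r z ≤ 1 :=
  max_le zero_le_one (by linarith [div_nonneg (dist_nonneg (x := z) (y := c)) hr])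

theorem tent_self (c : X) (r : ℝ) : tent c r c = 1 := by
  simp [tent]

theorem tent_eq_zero {c z : X} {r : ℝ} (hr : 0 < r) (h : r ≤ dist z c) : tent c r z = 0 :=
  max_eq_left (by linarith [(one_le_div hr).2 h])

theorem uniformContinuous_tent (c : X) (r : ℝ) : UniformContinuous (tent c r) :=
  (LipschitzWith.id.const_max 0).uniformContinuous.comp <| uniformContinuous_const.sub <|
    (uniformContinuous_id.dist uniformContinuous_const).div_const' r

end Tent

theorem dist_ciSup_ciSup_le {ι : Type*} [Nonempty ι] {f g : ι → ℝ} (hf : BddAbove (range f))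
    (hg : BddAbove (range g)) {ε : ℝ} (h : ∀ i, dist (f i) (g i) ≤ ε) :
    dist (⨆ i, f i) (⨆ i, g i) ≤ ε := by
  have hfg : ∀ i, f i ≤ g i + ε ∧ g i ≤ f i + ε := fun i => by
    have := abs_sub_le_iff.1 ((Real.dist_eq _ _).symm ▸ h i)
    constructor <;> linarith
  rw [Real.dist_eq, abs_sub_le_iff, sub_le_iff_le_add', sub_le_iff_le_add']
  exact ⟨ciSup_le fun i => (hfg i).1.trans (add_le_add_left (le_ciSup hg i) ε),
    ciSup_le fun i => (hfg i).2.trans (add_le_add_left (le_ciSup hf i) ε)⟩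

theorem uniformContinuous_iSup_of_tendsto_zero {α : Type*} [UniformSpace α] {t : ℕ → α → ℝ}
    {c : ℕ → ℝ} (ht : ∀ n, UniformContinuous (t n)) (ht0 : ∀ n z, 0 ≤ t n z)
    (htc : ∀ n z, t n z ≤ c n) (hc : Tendsto c atTop (𝓝 0)) :
    UniformContinuous fun z => ⨆ n, t n z := by
  obtain ⟨B, hB⟩ := hc.bddAbove_range
  have hbdd : ∀ z, BddAbove (range fun n => t n z) := fun z =>
    ⟨B, forall_mem_range.2 fun n => (htc n z).trans (hB (mem_range_self n))⟩
  refine Metric.uniformity_basis_dist_le.tendsto_right_iff.2 fun ε hε => ?_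
  obtain ⟨N, hN⟩ := eventually_atTop.1 (hc.eventually (eventually_le_nhds hε))
  have hfirst : ∀ᶠ p in 𝓤 α, ∀ n ∈ Iio N, dist (t n p.1) (t n p.2) ≤ ε :=
    (finite_Iio N).eventually_all.2 fun n _ =>
      Metric.uniformity_basis_dist_le.tendsto_right_iff.1 (ht n) ε hε
  filter_upwards [hfirst] with p hp
  refine dist_ciSup_ciSup_le (hbdd _) (hbdd _) fun n => ?_
  rcases lt_or_ge n N with hn | hn
  · exact hp n hn
  · rw [Real.dist_eq, abs_sub_le_iff]
    constructor <;> linarith [ht0 n p.1, ht0 n p.2, htc n p.1, htc n p.2, hN n hn]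

theorem exists_uniformContinuous_peaks {X : Type*} [PseudoMetricSpace X] {x : ℕ → X}
    {r b : ℕ → ℝ} {δ : ℝ} (hsep : Pairwise fun m n => δ ≤ dist (x m) (x n))
    (hr : ∀ n, 0 < r n) (hrδ : ∀ n, 2 * r n ≤ δ) (hb : ∀ n, 0 ≤ b n)
    (hb0 : Tendsto b atTop (𝓝 0)) :
    ∃ h : X → ℝ, UniformContinuous h ∧ (∀ n, b n ≤ h (x n)) ∧
      ∀ n, ∀ z ∈ Metric.sphere (x n) (r n), h z = 0 := by
  set t : ℕ → X → ℝ := fun n z => b n * tent (x n) (r n) z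
  have ht0 : ∀ n z, 0 ≤ t n z := fun n z => mul_nonneg (hb n) (tent_nonneg _ _ _)
  have htb : ∀ n z, t n z ≤ b n := fun n z =>
    mul_le_of_le_one_right (hb n) (tent_le_one _ (hr n).le z)
  obtain ⟨B, hB⟩ := hb0.bddAbove_range
  have hbdd : ∀ z, BddAbove (range fun n => t n z) := fun z =>
    ⟨B, forall_mem_range.2 fun n => (htb n z).trans (hB (mem_range_self n))⟩
  refine ⟨fun z => ⨆ n, t n z, uniformContinuous_iSup_of_tendsto_zero
    (fun n => (uniformContinuous_tent _ _).const_mul' (b n)) ht0 htb hb0, fun n => ?_,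
    fun n z hz => ?_⟩
  · simpa [t, tent_self] using le_ciSup (hbdd (x n)) n
  · rw [Metric.mem_sphere] at hz
    have hzero : ∀ m, t m z = 0 := fun m => by
      refine mul_eq_zero_of_right _ (tent_eq_zero (hr m) ?_)
      rcases eq_or_ne m n with rfl | hmn
      · exact hz.ge
      · linarith [hrδ m, hrδ n, hsep hmn, dist_triangle (x m) z (x n), dist_comm (x m) z]
    simp only [hzero, ciSup_const]

theorem exists_uniformContinuous_not_uniformContinuous_mul {X : Type*} [PseudoMetricSpace X]
    {f : X → ℝ} {x y : ℕ → X} {δ : ℝ} (hsep : Pairwise fun m n => δ ≤ dist (x m) (x n))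
    (hxy : ∀ n, 0 < dist (x n) (y n)) (hδ : ∀ n, 2 * dist (x n) (y n) ≤ δ)
    (hxy0 : Tendsto (fun n => dist (x n) (y n)) atTop (𝓝 0))
    (hfx : Tendsto (fun n => |f (x n)|) atTop atTop) :
    ∃ h : X → ℝ, UniformContinuous h ∧ ¬ UniformContinuous fun z => f z * h z := by
  obtain ⟨h, hh, hhx, hhy⟩ := exists_uniformContinuous_peaks hsep hxy hδ
    (fun n => inv_nonneg.2 (abs_nonneg (f (x n)))) (tendsto_inv_atTop_zero.comp hfx)
  refine ⟨h, hh, fun hfh => ?_⟩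
  obtain ⟨ε, hε, hfhε⟩ := Metric.uniformContinuous_iff.1 hfh 1 one_pos
  obtain ⟨n, hfn, hn⟩ :=
    ((hfx.eventually_gt_atTop 0).and (hxy0.eventually (gt_mem_nhds hε))).exists
  have hhy : h (y n) = 0 := hhy n (y n) (by rw [Metric.mem_sphere, dist_comm])
  have hhx : |f (x n)|⁻¹ ≤ h (x n) := hhx n
  have hjump : 1 ≤ |f (x n)| * h (x n) := calc
    1 = |f (x n)| * |f (x n)|⁻¹ := (mul_inv_cancel₀ hfn.ne').symm
    _ ≤ |f (x n)| * h (x n) := by gcongr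
  have := hfhε hn
  rw [Real.dist_eq, hhy, mul_zero, sub_zero, abs_mul,
    abs_of_nonneg ((inv_nonneg.2 (abs_nonneg _)).trans hhx)] at this
  linarith

theorem exists_seq_mem_add_one_lt {α : Type*} {S : ℕ → Set α} {g : α → ℝ}
    (h : ∀ n C, ∃ x ∈ S n, C < g x) :
    ∃ x : ℕ → α, (∀ n, x n ∈ S n) ∧ ∀ n, g (x n) + 1 < g (x (n + 1)) := by
  choose P hPS hPg using h
  let x : ℕ → α := fun n => Nat.rec (P 0 0) (fun k p => P (k + 1) (g p + 1)) n
  refine ⟨x, fun n => ?_, fun n => hPg _ _⟩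
  cases n <;> exact hPS _ _

theorem add_natCast_sub_le_of_add_one_le {u : ℕ → ℝ} (hu : ∀ n, u n + 1 ≤ u (n + 1)) {m n : ℕ}
    (hmn : m ≤ n) : u m + (n - m) ≤ u n := by
  have := monotone_nat_of_le_succ (f := fun n => u n - n)
    (fun n => by push_cast; linarith [hu n]) hmn
  simp only at this
  linarith

theorem pairwise_one_le_abs_sub_of_add_one_le {u : ℕ → ℝ} (hu : ∀ n, u n + 1 ≤ u (n + 1)) :
    Pairwise fun m n => 1 ≤ |u m - u n| := by
  intro m n hmn
  rcases hmn.lt_or_gt with h | h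
  · have : (1 : ℝ) ≤ n - m := by rw [le_sub_iff_add_le']; exact_mod_cast h
    rw [abs_sub_comm, abs_of_nonneg] <;>
      linarith [add_natCast_sub_le_of_add_one_le hu h.le]
  · have : (1 : ℝ) ≤ m - n := by rw [le_sub_iff_add_le']; exact_mod_cast h
    rw [abs_of_nonneg] <;> linarith [add_natCast_sub_le_of_add_one_le hu h.le]

theorem tendsto_atTop_of_add_one_le {u : ℕ → ℝ} (hu : ∀ n, u n + 1 ≤ u (n + 1)) :
    Tendsto u atTop atTop :=
  tendsto_atTop_mono (fun n => by simpa using add_natCast_sub_le_of_add_one_le hu n.zero_le)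
    (tendsto_atTop_add_const_left _ (u 0) tendsto_natCast_atTop_atTop)

theorem exists_ne_dist_lt_of_isolationIndex_lt {X : Type*} [MetricSpace X] {x : X} {ε : ℝ}
    (h : isolationIndex x < ENNReal.ofReal ε) : ∃ y, y ≠ x ∧ dist x y < ε := by
  obtain ⟨y, hy, hxy⟩ := Metric.infEDist_lt_iff.1 h
  exact ⟨y, hy, edist_lt_ofReal.1 hxy⟩

theorem exists_isolationIndex_lt_of_not_bddAbove {X : Type*} [MetricSpace X] {A : Set X}
    {g : X → ℝ} (hg : ∀ C, ∃ x ∈ A, C < g x) {ε : ℝ}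
    (hfin : {x ∈ A | ENNReal.ofReal ε ≤ isolationIndex x}.Finite) (C : ℝ) :
    ∃ x ∈ {x ∈ A | isolationIndex x < ENNReal.ofReal ε}, C < g x := by
  obtain ⟨D, hD⟩ := (hfin.image g).bddAbove
  obtain ⟨x, hxA, hx⟩ := hg (max C D)
  refine ⟨x, ⟨hxA, not_le.1 fun hI => ?_⟩, (le_max_left C D).trans_lt hx⟩
  linarith [hD (mem_image_of_mem g ⟨hxA, hI⟩), le_max_right C D]

/-- If some `A ⊆ X` is not Bourbaki-bounded and `{x ∈ A : I(x) ≥ δ}` is finite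
for every `δ > 0`, then there are two uniformly continuous real functions on
`X` whose product is not uniformly continuous; in particular `U(X)` is not a
ring. -/
theorem not_ring_of_nonBB {X : Type*} [MetricSpace X]
    (A : Set X) (hA : ¬ IsBourbakiBoundedSubset A)
    (hfin : ∀ δ : ℝ, 0 < δ → {x ∈ A | ENNReal.ofReal δ ≤ isolationIndex x}.Finite) :
    ∃ f h : X → ℝ, UniformContinuous f ∧ UniformContinuous h ∧
      ¬ UniformContinuous (fun x => f x * h x) := by
  obtain ⟨f, hf, hfA⟩ : ∃ f : X → ℝ, UniformContinuous f ∧ ∀ C, ∃ x ∈ A, C < |f x| := by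
    simpa [IsBourbakiBoundedSubset] using hA
  obtain ⟨δ, hδ, hfδ⟩ := Metric.uniformContinuous_iff.1 hf 1 one_pos
  have hε : ∀ n : ℕ, 0 < δ / 2 / (n + 1) := fun n => by positivity
  obtain ⟨x, hxS, hgap⟩ := exists_seq_mem_add_one_lt fun n =>
    exists_isolationIndex_lt_of_not_bddAbove hfA (hfin _ (hε n))
  choose y hyx hxy using fun n => exists_ne_dist_lt_of_isolationIndex_lt (hxS n).2
  have hsep : Pairwise fun m n => δ ≤ dist (x m) (x n) := fun m n hmn =>
    not_lt.1 fun hlt => (pairwise_one_le_abs_sub_of_add_one_le (fun n => (hgap n).le) hmn).not_gt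
      ((abs_abs_sub_abs_le_abs_sub _ _).trans_lt (hfδ hlt))
  have hsmall : ∀ n, 2 * dist (x n) (y n) ≤ δ := fun n => by
    linarith [hxy n, div_le_self (half_pos hδ).le (by simp : (1 : ℝ) ≤ n + 1)]
  have hε0 : Tendsto (fun n : ℕ => δ / 2 / (n + 1)) atTop (𝓝 0) := by
    simpa [Function.comp_def] using
      (tendsto_const_div_atTop_nhds_zero_nat (δ / 2)).comp (tendsto_add_atTop_nat 1)
  obtain ⟨h, hh, hfh⟩ := exists_uniformContinuous_not_uniformContinuous_mul hsep
    (fun n => dist_pos.2 (hyx n).symm) hsmall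
    (squeeze_zero (fun _ => dist_nonneg) (fun n => (hxy n).le) hε0)
    (tendsto_atTop_of_add_one_le fun n => (hgap n).le)
  exact ⟨f, h, hf, hh, hfh⟩
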